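/- Let X be a ringed space, N a g-pure-injective O_X-module, and A any O_X-module. Then the sheaf-hom Hom-sheaf 𝓗om_X(A, N) is flasque; in particular N itself is flasque. -/

import Mathlib

open TopologicalSpace CategoryTheory

universe u

namespace SheafPurity

/-! ## Purity for modules over a ring (via finite systems of linear equations) -/

/-- A linear map is a pure monomorphism if it is injective and every finite system of
linear equations with constants in `A` that is solvable in `B` is solvable in `A`. -/
def IsPureMono {R : Type u} [Ring R] {A B : Type u} [AddCommGroup A] [Module R A]
    [AddCommGroup B] [Module R B] (f : A →ₗ[R] B) : Prop :=
  Function.Injective f ∧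
    ∀ (m n : ℕ) (G : Matrix (Fin m) (Fin n) R) (a : Fin m → A) (b : Fin n → B),
      (∀ i, (∑ j, G i j • b j) = f (a i)) →
      ∃ a' : Fin n → A, ∀ i, (∑ j, G i j • a' j) = a i

/-- A module is pure-injective if every morphism to it extends along pure monomorphisms. -/
def PureInjectiveModule (R : Type u) [Ring R] (M : Type u) [AddCommGroup M]
    [Module R M] : Prop :=
  ∀ (A B : Type u) [AddCommGroup A] [Module R A] [AddCommGroup B] [Module R B]
    (f : A →ₗ[R] B), IsPureMono f → ∀ g : A →ₗ[R] M, ∃ h : B →ₗ[R] M, h.comp f = g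

/-! ## Sheaves of rings and sheaves of modules on a topological space -/

variable (X : Type u) [TopologicalSpace X]

/-- The sheaf condition for a family of sections with restriction maps: compatible
families of sections over a cover glue uniquely. -/
def IsSheafFamily (F : Opens X → Type u)
    (res : ∀ (U V : Opens X), V ≤ U → F U → F V) : Prop :=
  ∀ (ι : Type u) (U : Opens X) (V : ι → Opens X) (hU : U = iSup V) (s : ∀ i, F (V i)),
    (∀ (i j : ι) (W : Opens X) (hWi : W ≤ V i) (hWj : W ≤ V j),
      res (V i) W hWi (s i) = res (V j) W hWj (s j)) →
    ∃! t : F U, ∀ i, res U (V i) ((le_iSup V i).trans hU.ge) t = s i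

/-- A sheaf of commutative rings on `X`; `X` together with such a sheaf is a ringed space. -/
structure RingSheaf where
  obj : Opens X → Type u
  ring : ∀ U, CommRing (obj U)
  res : ∀ {U V : Opens X}, V ≤ U → obj U →+* obj V
  res_id : ∀ {U : Opens X} (s : obj U), res le_rfl s = s
  res_res : ∀ {U V W : Opens X} (h1 : W ≤ V) (h2 : V ≤ U) (s : obj U),
    res h1 (res h2 s) = res (h1.trans h2) s
  sheaf : IsSheafFamily X obj fun _ _ h s => res h s

attribute [instance] RingSheaf.ring

variable {X}

/-- A sheaf of `O`-modules on the ringed space `(X, O)`. -/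
structure OMod (O : RingSheaf X) where
  obj : Opens X → Type u
  acg : ∀ U, AddCommGroup (obj U)
  mod : ∀ U, Module (O.obj U) (obj U)
  res : ∀ {U V : Opens X}, V ≤ U → obj U →+ obj V
  res_id : ∀ {U : Opens X} (s : obj U), res le_rfl s = s
  res_res : ∀ {U V W : Opens X} (h1 : W ≤ V) (h2 : V ≤ U) (s : obj U),
    res h1 (res h2 s) = res (h1.trans h2) s
  res_smul : ∀ {U V : Opens X} (h : V ≤ U) (r : O.obj U) (m : obj U),
    res h (r • m) = O.res h r • res h m
  sheaf : IsSheafFamily X obj fun _ _ h s => res h s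

attribute [instance] OMod.acg OMod.mod

variable {O : RingSheaf X}

/-- Morphisms of sheaves of `O`-modules. -/
@[ext]
structure Hom (M N : OMod O) where
  app : ∀ U, M.obj U →ₗ[O.obj U] N.obj U
  naturality : ∀ {U V : Opens X} (h : V ≤ U) (m : M.obj U),
    N.res h (app U m) = app V (M.res h m)

instance : Category (OMod O) where
  Hom M N := Hom M N
  id M := ⟨fun _ => LinearMap.id, fun _ _ => rfl⟩
  comp f g := ⟨fun U => (g.app U).comp (f.app U), fun h m => by
    simp only [LinearMap.comp_apply]
    rw [g.naturality, f.naturality]⟩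
  id_comp f := by apply Hom.ext; rfl
  comp_id f := by apply Hom.ext; rfl
  assoc f g h := by apply Hom.ext; rfl

lemma hom_app {M N : OMod O} (f : M ⟶ N) (U : Opens X) : (f : Hom M N).app U = f.app U := rfl

@[simp] lemma comp_app {M N P : OMod O} (f : M ⟶ N) (g : N ⟶ P) (U : Opens X) (m : M.obj U) :
    (f ≫ g).app U m = g.app U (f.app U m) := rfl

@[simp] lemma id_app (M : OMod O) (U : Opens X) (m : M.obj U) :
    (Hom.app (𝟙 M) U) m = m := rfl

end SheafPurity

namespace SheafPurity

variable {X : Type u} [TopologicalSpace X] {O : RingSheaf X}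

/-! ## Stalks -/

/-- An open neighbourhood of `x`. -/
structure Nbhd (x : X) where
  U : Opens X
  mem : x ∈ U

instance (x : X) : Inhabited (Nbhd x) := ⟨⟨⊤, trivial⟩⟩

/-- Intersection of neighbourhoods. -/
def Nbhd.inf {x : X} (N₁ N₂ : Nbhd x) : Nbhd x := ⟨N₁.U ⊓ N₂.U, ⟨N₁.mem, N₂.mem⟩⟩

lemma Nbhd.inf_le_left {x : X} (N₁ N₂ : Nbhd x) : (N₁.inf N₂).U ≤ N₁.U := _root_.inf_le_left
lemma Nbhd.inf_le_right {x : X} (N₁ N₂ : Nbhd x) : (N₁.inf N₂).U ≤ N₂.U := _root_.inf_le_right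

/-- The germ relation. -/
def germRel (M : OMod O) (x : X) :
    (Σ N : Nbhd x, M.obj N.U) → (Σ N : Nbhd x, M.obj N.U) → Prop :=
  fun a b => ∃ (N : Nbhd x) (h₁ : N.U ≤ a.1.U) (h₂ : N.U ≤ b.1.U),
    M.res h₁ a.2 = M.res h₂ b.2

/-- The stalk of a sheaf of modules at a point. -/
def Stalk (M : OMod O) (x : X) : Type u := Quot (germRel M x)

/-- The germ of a section. -/
def germ {M : OMod O} {x : X} (N : Nbhd x) (s : M.obj N.U) : Stalk M x :=
  Quot.mk _ ⟨N, s⟩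

lemma germ_eq {M : OMod O} {x : X} {N₁ N₂ : Nbhd x} {s₁ : M.obj N₁.U} {s₂ : M.obj N₂.U}
    (N : Nbhd x) (h₁ : N.U ≤ N₁.U) (h₂ : N.U ≤ N₂.U)
    (h : M.res h₁ s₁ = M.res h₂ s₂) : germ N₁ s₁ = germ N₂ s₂ :=
  Quot.sound ⟨N, h₁, h₂, h⟩

lemma germ_res {M : OMod O} {x : X} {N₁ N₂ : Nbhd x} (h : N₂.U ≤ N₁.U) (s : M.obj N₁.U) :
    germ N₂ (M.res h s) = germ N₁ s :=
  germ_eq N₂ le_rfl h (by rw [M.res_id])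

lemma germ_surj {M : OMod O} {x : X} (t : Stalk M x) : ∃ (N : Nbhd x) (s : M.obj N.U), t = germ N s := by
  induction t using Quot.ind with
  | _ a => exact ⟨a.1, a.2, rfl⟩

/-- Lift a binary germ-compatible operation to stalks. -/
def lift₂ {M₁ M₂ : OMod O} {x : X} {γ : Sort*}
    (f : ∀ (N₁ : Nbhd x), M₁.obj N₁.U → ∀ (N₂ : Nbhd x), M₂.obj N₂.U → γ)
    (hl : ∀ N₁ s₁ N₁' s₁' N₂ s₂, germRel M₁ x ⟨N₁, s₁⟩ ⟨N₁', s₁'⟩ →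
      f N₁ s₁ N₂ s₂ = f N₁' s₁' N₂ s₂)
    (hr : ∀ N₁ s₁ N₂ s₂ N₂' s₂', germRel M₂ x ⟨N₂, s₂⟩ ⟨N₂', s₂'⟩ →
      f N₁ s₁ N₂ s₂ = f N₁ s₁ N₂' s₂') :
    Stalk M₁ x → Stalk M₂ x → γ :=
  Quot.lift
    (fun a => Quot.lift (fun b => f a.1 a.2 b.1 b.2)
      (fun b b' hb => hr a.1 a.2 b.1 b.2 b'.1 b'.2 hb))
    (fun a a' ha => funext fun t => by
      induction t using Quot.ind with
      | _ b => exact hl a.1 a.2 a'.1 a'.2 b.1 b.2 ha)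

@[simp] lemma lift₂_germ {M₁ M₂ : OMod O} {x : X} {γ : Sort*}
    (f : ∀ (N₁ : Nbhd x), M₁.obj N₁.U → ∀ (N₂ : Nbhd x), M₂.obj N₂.U → γ) (hl hr)
    (N₁ : Nbhd x) (s₁ : M₁.obj N₁.U) (N₂ : Nbhd x) (s₂ : M₂.obj N₂.U) :
    lift₂ (γ := γ) f hl hr (germ N₁ s₁) (germ N₂ s₂) = f N₁ s₁ N₂ s₂ := rfl

end SheafPurity

namespace SheafPurity

variable {X : Type u} [TopologicalSpace X] {O : RingSheaf X}

protected def Stalk.add {M : OMod O} {x : X} : Stalk M x → Stalk M x → Stalk M x :=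
  lift₂ (fun N₁ s₁ N₂ s₂ => germ (N₁.inf N₂)
      (M.res (N₁.inf_le_left N₂) s₁ + M.res (N₁.inf_le_right N₂) s₂))
    (by
      rintro N₁ s₁ N₁' s₁' N₂ s₂ ⟨W, h₁, h₂, he⟩
      refine germ_eq (W.inf N₂) (show (W.inf N₂).U ≤ (N₁.inf N₂).U from inf_le_inf_right _ h₁)
        (show (W.inf N₂).U ≤ (N₁'.inf N₂).U from inf_le_inf_right _ h₂) ?_
      simp only [map_add, M.res_res]
      congr 1
      rw [← M.res_res (W.inf_le_left N₂) h₁, he, M.res_res])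
    (by
      rintro N₁ s₁ N₂ s₂ N₂' s₂' ⟨W, h₁, h₂, he⟩
      refine germ_eq (N₁.inf W) (show (N₁.inf W).U ≤ (N₁.inf N₂).U from inf_le_inf_left _ h₁)
        (show (N₁.inf W).U ≤ (N₁.inf N₂').U from inf_le_inf_left _ h₂) ?_
      simp only [map_add, M.res_res]
      congr 1
      rw [← M.res_res (N₁.inf_le_right W) h₁, he, M.res_res])

protected def Stalk.neg {M : OMod O} {x : X} : Stalk M x → Stalk M x :=
  Quot.lift (fun a => germ a.1 (-a.2)) (by
    rintro a b ⟨W, h₁, h₂, he⟩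
    exact germ_eq W h₁ h₂ (by simp only [map_neg, he]))

@[simp] lemma add_germ {M : OMod O} {x : X} (N₁ N₂ : Nbhd x) (s₁ : M.obj N₁.U)
    (s₂ : M.obj N₂.U) : Stalk.add (germ N₁ s₁) (germ N₂ s₂) =
      germ (N₁.inf N₂) (M.res (N₁.inf_le_left N₂) s₁ + M.res (N₁.inf_le_right N₂) s₂) := rfl

@[simp] lemma neg_germ {M : OMod O} {x : X} (N : Nbhd x) (s : M.obj N.U) :
    Stalk.neg (germ N s) = germ N (-s) := rfl


section AddGroup
variable {M : OMod O} {x : X}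

set_option maxHeartbeats 1000000 in
lemma stalk_add_assoc (a b c : Stalk M x) :
    Stalk.add (Stalk.add a b) c = Stalk.add a (Stalk.add b c) := by
  obtain ⟨N₁, s₁, rfl⟩ := germ_surj a
  obtain ⟨N₂, s₂, rfl⟩ := germ_surj b
  obtain ⟨N₃, s₃, rfl⟩ := germ_surj c
  simp only [add_germ]
  refine germ_eq ((N₁.inf N₂).inf N₃) le_rfl (le_of_eq (inf_assoc _ _ _)) ?_
  simp only [map_add, M.res_res, add_assoc]

lemma stalk_zero_add (a : Stalk M x) :
    Stalk.add (germ (default : Nbhd x) 0) a = a := by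
  obtain ⟨N, s, rfl⟩ := germ_surj a
  simp only [add_germ]
  refine germ_eq ((default : Nbhd x).inf N) le_rfl (Nbhd.inf_le_right _ _) ?_
  simp only [map_add, map_zero, M.res_res, zero_add]

lemma stalk_add_zero (a : Stalk M x) :
    Stalk.add a (germ (default : Nbhd x) 0) = a := by
  obtain ⟨N, s, rfl⟩ := germ_surj a
  simp only [add_germ]
  refine germ_eq (N.inf (default : Nbhd x)) le_rfl (Nbhd.inf_le_left _ _) ?_
  simp only [map_add, map_zero, M.res_res, add_zero]

lemma stalk_add_comm (a b : Stalk M x) : Stalk.add a b = Stalk.add b a := by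
  obtain ⟨N₁, s₁, rfl⟩ := germ_surj a
  obtain ⟨N₂, s₂, rfl⟩ := germ_surj b
  simp only [add_germ]
  refine germ_eq (N₁.inf N₂) le_rfl (le_of_eq (inf_comm _ _)) ?_
  simp only [map_add, M.res_res, add_comm]

lemma stalk_neg_add_cancel (a : Stalk M x) :
    Stalk.add (Stalk.neg a) a = germ (default : Nbhd x) 0 := by
  obtain ⟨N, s, rfl⟩ := germ_surj a
  simp only [neg_germ, add_germ]
  refine germ_eq (N.inf N) le_rfl le_top ?_
  simp only [map_add, map_neg, map_zero, neg_add_cancel]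

instance : Add (Stalk M x) := ⟨Stalk.add⟩
instance : Neg (Stalk M x) := ⟨Stalk.neg⟩
instance : Zero (Stalk M x) := ⟨germ (default : Nbhd x) 0⟩

instance : AddCommGroup (Stalk M x) where
  add := (· + ·)
  neg := Neg.neg
  zero := 0
  add_assoc := stalk_add_assoc
  zero_add := stalk_zero_add
  add_zero := stalk_add_zero
  add_comm := stalk_add_comm
  neg_add_cancel := stalk_neg_add_cancel
  nsmul := nsmulRec
  nsmul_zero := fun _ => rfl
  nsmul_succ := fun _ _ => rfl
  zsmul := zsmulRec
  zsmul_zero' := fun _ => rfl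
  zsmul_succ' := fun _ _ => rfl
  zsmul_neg' := fun _ _ => rfl

end AddGroup

@[simp] lemma germ_add {M : OMod O} {x : X} (N : Nbhd x) (s t : M.obj N.U) :
    (germ N (s + t) : Stalk M x) = germ N s + germ N t := by
  show _ = Stalk.add _ _
  simp only [add_germ]
  exact germ_eq (N.inf N) (Nbhd.inf_le_left _ _) le_rfl (by simp [map_add, M.res_res])

@[simp] lemma germ_zero {M : OMod O} {x : X} (N : Nbhd x) :
    (germ N (0 : M.obj N.U) : Stalk M x) = 0 := by
  show _ = germ (default : Nbhd x) 0
  exact germ_eq N le_rfl le_top (by simp)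

end SheafPurity

namespace SheafPurity

variable {X : Type u} [TopologicalSpace X] {O : RingSheaf X}

section MoreStalk
variable {M : OMod O} {x : X}

@[simp] lemma add_germ' (N₁ N₂ : Nbhd x) (s₁ : M.obj N₁.U) (s₂ : M.obj N₂.U) :
    germ N₁ s₁ + germ N₂ s₂ =
      germ (N₁.inf N₂) (M.res (N₁.inf_le_left N₂) s₁ + M.res (N₁.inf_le_right N₂) s₂) := rfl

@[simp] lemma neg_germ' (N : Nbhd x) (s : M.obj N.U) :
    -(germ N s) = germ N (-s) := rfl

lemma zero_def : (0 : Stalk M x) = germ (default : Nbhd x) 0 := rfl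

end MoreStalk

/-- A sheaf of rings, regarded as a sheaf of modules over itself. -/
@[reducible] def RingSheaf.toOMod (O : RingSheaf X) : OMod O where
  obj := O.obj
  acg U := inferInstance
  mod U := inferInstance
  res h := (O.res h).toAddMonoidHom
  res_id := O.res_id
  res_res := O.res_res
  res_smul h r m := by simpa [smul_eq_mul] using map_mul (O.res h) r m
  sheaf := O.sheaf

/-- The stalk of the structure sheaf at a point. -/
abbrev RStalk (O : RingSheaf X) (x : X) : Type u := Stalk O.toOMod x

section RingStalk

variable {x : X}

@[simp] lemma rh_apply {α β : Type u} [NonAssocSemiring α] [NonAssocSemiring β]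
    (f : α →+* β) (a : α) : f.toAddMonoidHom a = f a := rfl

@[simp] lemma toOMod_res {U V : Opens X} (h : V ≤ U) (s : O.obj U) :
    O.toOMod.res h s = O.res h s := rfl

protected def RStalk.mul : RStalk O x → RStalk O x → RStalk O x :=
  lift₂ (fun N₁ s₁ N₂ s₂ => germ (N₁.inf N₂)
      (O.res (N₁.inf_le_left N₂) s₁ * O.res (N₁.inf_le_right N₂) s₂))
    (by
      rintro N₁ s₁ N₁' s₁' N₂ s₂ ⟨W, h₁, h₂, he⟩
      refine germ_eq (W.inf N₂) (show (W.inf N₂).U ≤ (N₁.inf N₂).U from inf_le_inf_right _ h₁)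
        (show (W.inf N₂).U ≤ (N₁'.inf N₂).U from inf_le_inf_right _ h₂) ?_
      have he' : O.res h₁ s₁ = O.res h₂ s₁' := he
      show O.res _ _ = O.res _ _
      simp only [map_mul, O.res_res]
      congr 1
      rw [← O.res_res (W.inf_le_left N₂) h₁, he', O.res_res])
    (by
      rintro N₁ s₁ N₂ s₂ N₂' s₂' ⟨W, h₁, h₂, he⟩
      refine germ_eq (N₁.inf W) (show (N₁.inf W).U ≤ (N₁.inf N₂).U from inf_le_inf_left _ h₁)
        (show (N₁.inf W).U ≤ (N₁.inf N₂').U from inf_le_inf_left _ h₂) ?_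
      have he' : O.res h₁ s₂ = O.res h₂ s₂' := he
      show O.res _ _ = O.res _ _
      simp only [map_mul, O.res_res]
      congr 1
      rw [← O.res_res (N₁.inf_le_right W) h₁, he', O.res_res])

instance : Mul (RStalk O x) := ⟨RStalk.mul⟩
instance : One (RStalk O x) := ⟨germ (M := O.toOMod) (default : Nbhd x) 1⟩

@[simp] lemma mul_germ (N₁ N₂ : Nbhd x) (s₁ : O.obj N₁.U) (s₂ : O.obj N₂.U) :
    (germ (M := O.toOMod) N₁ s₁) * (germ (M := O.toOMod) N₂ s₂) =
      germ (N₁.inf N₂) (O.res (N₁.inf_le_left N₂) s₁ * O.res (N₁.inf_le_right N₂) s₂) := rfl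

lemma one_def : (1 : RStalk O x) = germ (M := O.toOMod) (default : Nbhd x) 1 := rfl


section RingAx
variable {x : X}

lemma r_mul_assoc (a b c : RStalk O x) : a * b * c = a * (b * c) := by
  obtain ⟨N₁, s₁, rfl⟩ := germ_surj a
  obtain ⟨N₂, s₂, rfl⟩ := germ_surj b
  obtain ⟨N₃, s₃, rfl⟩ := germ_surj c
  simp only [mul_germ]
  refine germ_eq ((N₁.inf N₂).inf N₃) le_rfl (le_of_eq (inf_assoc _ _ _)) ?_
  simp only [rh_apply, map_mul, O.res_res, mul_assoc]

lemma r_one_mul (a : RStalk O x) : 1 * a = a := by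
  obtain ⟨N, s, rfl⟩ := germ_surj a
  rw [one_def]
  simp only [mul_germ]
  refine germ_eq ((default : Nbhd x).inf N) le_rfl (Nbhd.inf_le_right _ _) ?_
  simp only [rh_apply, map_mul, map_one, O.res_res, one_mul]

lemma r_mul_comm (a b : RStalk O x) : a * b = b * a := by
  obtain ⟨N₁, s₁, rfl⟩ := germ_surj a
  obtain ⟨N₂, s₂, rfl⟩ := germ_surj b
  simp only [mul_germ]
  refine germ_eq (N₁.inf N₂) le_rfl (le_of_eq (inf_comm _ _)) ?_
  simp only [rh_apply, map_mul, O.res_res, mul_comm]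

lemma r_mul_one (a : RStalk O x) : a * 1 = a := by
  rw [r_mul_comm, r_one_mul]

lemma r_left_distrib (a b c : RStalk O x) : a * (b + c) = a * b + a * c := by
  obtain ⟨N₁, s₁, rfl⟩ := germ_surj a
  obtain ⟨N₂, s₂, rfl⟩ := germ_surj b
  obtain ⟨N₃, s₃, rfl⟩ := germ_surj c
  simp only [add_germ' (M := O.toOMod), mul_germ]
  refine germ_eq (N₁.inf (N₂.inf N₃)) le_rfl
    (show (N₁.inf (N₂.inf N₃)).U ≤ ((N₁.inf N₂).inf (N₁.inf N₃)).U from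
    le_inf (inf_le_inf_left _ (Nbhd.inf_le_left _ _))
      (inf_le_inf_left _ (Nbhd.inf_le_right _ _))) ?_
  simp only [rh_apply, map_mul, map_add, O.res_res, mul_add]

lemma r_right_distrib (a b c : RStalk O x) : (a + b) * c = a * c + b * c := by
  rw [r_mul_comm, r_left_distrib, r_mul_comm c a, r_mul_comm c b]

lemma r_zero_mul (a : RStalk O x) : 0 * a = 0 := by
  obtain ⟨N, s, rfl⟩ := germ_surj a
  rw [zero_def]
  simp only [mul_germ]
  refine germ_eq ((default : Nbhd x).inf N) le_rfl le_top ?_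
  simp only [rh_apply, map_mul, map_zero, zero_mul]

lemma r_mul_zero (a : RStalk O x) : a * 0 = 0 := by
  rw [r_mul_comm, r_zero_mul]

instance : CommRing (RStalk O x) where
  __ := (inferInstance : AddCommGroup (Stalk (O.toOMod) x))
  mul := (· * ·)
  one := 1
  mul_assoc := r_mul_assoc
  one_mul := r_one_mul
  mul_one := r_mul_one
  mul_comm := r_mul_comm
  left_distrib := r_left_distrib
  right_distrib := r_right_distrib
  zero_mul := r_zero_mul
  mul_zero := r_mul_zero

end RingAx

/-- The germ map for the structure sheaf, as a ring homomorphism. -/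
def RingSheaf.germHom (O : RingSheaf X) {x : X} (N : Nbhd x) : O.obj N.U →+* RStalk O x where
  toFun s := germ (M := O.toOMod) N s
  map_one' := by
    rw [one_def]
    exact germ_eq N le_rfl le_top (by simp only [rh_apply, map_one])
  map_mul' r s := by
    show germ (M := O.toOMod) N (r * s) = germ (M := O.toOMod) N r * germ (M := O.toOMod) N s
    rw [mul_germ]
    exact germ_eq (N.inf N) (Nbhd.inf_le_left _ _) le_rfl
      (by simp only [rh_apply, map_mul, O.res_res])
  map_zero' := by
    show germ (M := O.toOMod) N 0 = 0
    exact germ_zero (M := O.toOMod) N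
  map_add' r s := by
    show germ (M := O.toOMod) N (r + s) = germ (M := O.toOMod) N r + germ (M := O.toOMod) N s
    exact germ_add (M := O.toOMod) N r s

@[simp] lemma germHom_apply {x : X} (N : Nbhd x) (s : O.obj N.U) :
    O.germHom N s = germ (M := O.toOMod) N s := rfl

lemma germ_res_ring {x : X} {N₁ N₂ : Nbhd x} (h : N₂.U ≤ N₁.U) (s : O.obj N₁.U) :
    germ (M := O.toOMod) N₂ (O.res h s) = germ (M := O.toOMod) N₁ s :=
  germ_res (M := O.toOMod) h s

end RingStalk

end SheafPurity

namespace SheafPurity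

variable {X : Type u} [TopologicalSpace X] {O : RingSheaf X}

section ModuleStalk

variable {M : OMod O} {x : X}

protected def Stalk.smul : RStalk O x → Stalk M x → Stalk M x :=
  lift₂ (fun N₁ r N₂ s => germ (N₁.inf N₂)
      (O.res (N₁.inf_le_left N₂) r • M.res (N₁.inf_le_right N₂) s))
    (by
      rintro N₁ r N₁' r' N₂ s ⟨W, h₁, h₂, he⟩
      refine germ_eq (W.inf N₂) (show (W.inf N₂).U ≤ (N₁.inf N₂).U from inf_le_inf_right _ h₁)
        (show (W.inf N₂).U ≤ (N₁'.inf N₂).U from inf_le_inf_right _ h₂) ?_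
      have he' : O.res h₁ r = O.res h₂ r' := he
      simp only [map_add, M.res_smul, M.res_res, O.res_res]
      congr 1
      rw [← O.res_res (W.inf_le_left N₂) h₁, he', O.res_res])
    (by
      rintro N₁ r N₂ s N₂' s' ⟨W, h₁, h₂, he⟩
      refine germ_eq (N₁.inf W) (show (N₁.inf W).U ≤ (N₁.inf N₂).U from inf_le_inf_left _ h₁)
        (show (N₁.inf W).U ≤ (N₁.inf N₂').U from inf_le_inf_left _ h₂) ?_
      simp only [M.res_smul, M.res_res, O.res_res]
      congr 1
      rw [← M.res_res (N₁.inf_le_right W) h₁, he, M.res_res])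

instance : SMul (RStalk O x) (Stalk M x) := ⟨Stalk.smul⟩

@[simp] lemma smul_germ (N₁ N₂ : Nbhd x) (r : O.obj N₁.U) (s : M.obj N₂.U) :
    (germ (M := O.toOMod) N₁ r) • (germ N₂ s) =
      germ (N₁.inf N₂) (O.res (N₁.inf_le_left N₂) r • M.res (N₁.inf_le_right N₂) s) := rfl

lemma st_one_smul (a : Stalk M x) : (1 : RStalk O x) • a = a := by
  obtain ⟨N, s, rfl⟩ := germ_surj a
  rw [one_def]
  simp only [smul_germ]
  refine germ_eq ((default : Nbhd x).inf N) le_rfl (Nbhd.inf_le_right _ _) ?_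
  simp only [M.res_smul, M.res_res, map_one, one_smul]

lemma st_mul_smul (r t : RStalk O x) (a : Stalk M x) : (r * t) • a = r • t • a := by
  obtain ⟨N₁, r, rfl⟩ := germ_surj r
  obtain ⟨N₂, t, rfl⟩ := germ_surj t
  obtain ⟨N₃, s, rfl⟩ := germ_surj a
  simp only [mul_germ, smul_germ]
  refine germ_eq ((N₁.inf N₂).inf N₃) le_rfl (le_of_eq (inf_assoc _ _ _)) ?_
  simp only [rh_apply, M.res_smul, M.res_res, O.res_res, map_mul, mul_smul]

lemma st_smul_add (r : RStalk O x) (a b : Stalk M x) : r • (a + b) = r • a + r • b := by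
  obtain ⟨N₁, rr, rfl⟩ := germ_surj r
  obtain ⟨N₂, s, rfl⟩ := germ_surj a
  obtain ⟨N₃, t, rfl⟩ := germ_surj b
  simp only [add_germ', smul_germ]
  refine germ_eq (N₁.inf (N₂.inf N₃)) le_rfl
    (show (N₁.inf (N₂.inf N₃)).U ≤ ((N₁.inf N₂).inf (N₁.inf N₃)).U from
    le_inf (inf_le_inf_left _ (Nbhd.inf_le_left _ _))
      (inf_le_inf_left _ (Nbhd.inf_le_right _ _))) ?_
  simp only [rh_apply, M.res_smul, M.res_res, O.res_res, map_add, smul_add]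

lemma st_smul_zero (r : RStalk O x) : r • (0 : Stalk M x) = 0 := by
  obtain ⟨N, rr, rfl⟩ := germ_surj r
  rw [zero_def]
  simp only [smul_germ]
  refine germ_eq (N.inf (default : Nbhd x)) le_rfl le_top ?_
  simp only [map_zero, smul_zero]

lemma st_add_smul (r t : RStalk O x) (a : Stalk M x) : (r + t) • a = r • a + t • a := by
  obtain ⟨N₁, rr, rfl⟩ := germ_surj r
  obtain ⟨N₂, tt, rfl⟩ := germ_surj t
  obtain ⟨N₃, s, rfl⟩ := germ_surj a
  simp only [add_germ', smul_germ]
  refine germ_eq ((N₁.inf N₂).inf N₃) le_rfl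
    (show ((N₁.inf N₂).inf N₃).U ≤ ((N₁.inf N₃).inf (N₂.inf N₃)).U from
    le_inf (inf_le_inf_right _ (Nbhd.inf_le_left _ _))
      (inf_le_inf_right _ (Nbhd.inf_le_right _ _))) ?_
  simp only [rh_apply, M.res_smul, M.res_res, O.res_res, map_add, add_smul]

lemma st_zero_smul (a : Stalk M x) : (0 : RStalk O x) • a = 0 := by
  obtain ⟨N, s, rfl⟩ := germ_surj a
  rw [zero_def]
  simp only [smul_germ]
  refine germ_eq ((default : Nbhd x).inf N) le_rfl le_top ?_
  simp only [rh_apply, map_zero, zero_smul]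

instance : Module (RStalk O x) (Stalk M x) where
  smul := (· • ·)
  one_smul := st_one_smul
  mul_smul := st_mul_smul
  smul_add := st_smul_add
  smul_zero := st_smul_zero
  add_smul := st_add_smul
  zero_smul := st_zero_smul

lemma germ_smul (N : Nbhd x) (r : O.obj N.U) (s : M.obj N.U) :
    (germ N (r • s) : Stalk M x) = O.germHom N r • germ N s := by
  rw [germHom_apply]
  simp only [smul_germ]
  exact germ_eq (N.inf N) (Nbhd.inf_le_left _ _) le_rfl
    (by simp only [M.res_smul, M.res_res, O.res_res, rh_apply])

end ModuleStalk

/-- The underlying function of the map induced on stalks by a morphism. -/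
def stalkMapFun {M N : OMod O} (f : Hom M N) (x : X) : Stalk M x → Stalk N x :=
  Quot.lift (fun a => germ a.1 (f.app _ a.2)) (by
    rintro a b ⟨W, h₁, h₂, he⟩
    refine germ_eq W h₁ h₂ ?_
    rw [f.naturality, f.naturality, he])

@[simp] lemma stalkMapFun_germ {M N : OMod O} (f : Hom M N) (x : X)
    (Nb : Nbhd x) (s : M.obj Nb.U) :
    stalkMapFun f x (germ Nb s) = germ Nb (f.app Nb.U s) := rfl

/-- The map induced on stalks by a morphism of sheaves of modules, as a linear map
over the stalk of the structure sheaf. -/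
def stalkMap {M N : OMod O} (f : M ⟶ N) (x : X) : Stalk M x →ₗ[RStalk O x] Stalk N x where
  toFun := stalkMapFun f x
  map_add' a b := by
    obtain ⟨N₁, s₁, rfl⟩ := germ_surj a
    obtain ⟨N₂, s₂, rfl⟩ := germ_surj b
    simp only [add_germ', stalkMapFun_germ]
    refine germ_eq (N₁.inf N₂) le_rfl le_rfl ?_
    simp only [map_add, N.res_res, M.res_res, Hom.naturality]
  map_smul' r a := by
    obtain ⟨N₁, rr, rfl⟩ := germ_surj r
    obtain ⟨N₂, s, rfl⟩ := germ_surj a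
    simp only [smul_germ, stalkMapFun_germ, RingHom.id_apply]
    refine germ_eq (N₁.inf N₂) le_rfl le_rfl ?_
    simp only [map_smul, N.res_smul, M.res_res, N.res_res, O.res_res, Hom.naturality]

@[simp] lemma stalkMap_germ {M N : OMod O} (f : M ⟶ N) (x : X) (Nb : Nbhd x) (s : M.obj Nb.U) :
    stalkMap f x (germ Nb s) = germ Nb ((f : Hom M N).app Nb.U s) := rfl

/-! ## Geometric purity -/

/-- A morphism of sheaves of modules is a geometrically pure monomorphism if it is a
monomorphism (i.e. injective on sections) and the induced map on every stalk is a pure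
monomorphism of modules over the stalk ring. -/
def IsGPureMono {M N : OMod O} (f : M ⟶ N) : Prop :=
  (∀ U, Function.Injective ((f : Hom M N).app U)) ∧
    ∀ x : X, IsPureMono (stalkMap f x)

/-- A sheaf of modules is geometrically pure-injective if every morphism to it extends
along every geometrically pure monomorphism. -/
def GPureInjective (P : OMod O) : Prop :=
  ∀ (M N : OMod O) (f : M ⟶ N), IsGPureMono f →
    ∀ φ : M ⟶ P, ∃ ψ : N ⟶ P, f ≫ ψ = φ

end SheafPurity

namespace SheafPurity

variable {X : Type u} [TopologicalSpace X] {O : RingSheaf X}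

/-! ## Skyscraper sheaves -/

section Sky

variable (x : X) (A : Type u) [AddCommGroup A] [Module (RStalk O x) A]

/-- The module structure on the sections of the skyscraper sheaf. -/
def skyModule (U : Opens X) : Module (O.obj U) (PLift (x ∈ U) → A) where
  smul r f := fun h => (O.germHom ⟨U, h.down⟩ r) • f h
  one_smul f := funext fun h => by
    show O.germHom ⟨U, h.down⟩ 1 • f h = f h
    simp
  mul_smul r t f := funext fun h => by
    show O.germHom ⟨U, h.down⟩ (r * t) • f h =
      O.germHom ⟨U, h.down⟩ r • O.germHom ⟨U, h.down⟩ t • f h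
    rw [map_mul, mul_smul]
  smul_zero r := funext fun h => by
    show O.germHom ⟨U, h.down⟩ r • (0 : A) = 0
    simp
  smul_add r f g := funext fun h => by
    show O.germHom ⟨U, h.down⟩ r • (f h + g h) =
      O.germHom ⟨U, h.down⟩ r • f h + O.germHom ⟨U, h.down⟩ r • g h
    rw [smul_add]
  add_smul r t f := funext fun h => by
    show O.germHom ⟨U, h.down⟩ (r + t) • f h =
      O.germHom ⟨U, h.down⟩ r • f h + O.germHom ⟨U, h.down⟩ t • f h
    rw [map_add, add_smul]
  zero_smul f := funext fun h => by
    show O.germHom ⟨U, h.down⟩ 0 • f h = 0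
    simp

/-- The skyscraper sheaf at `x` with value the `RStalk O x`-module `A`. -/
def sky : OMod O where
  obj U := PLift (x ∈ U) → A
  acg U := inferInstance
  mod U := skyModule x A U
  res {U V} h :=
    { toFun := fun f hv => f ⟨h hv.down⟩
      map_zero' := rfl
      map_add' := fun _ _ => rfl }
  res_id _ := rfl
  res_res _ _ _ := rfl
  res_smul {U V} h r f := by
    funext hv
    show O.germHom ⟨U, h hv.down⟩ r • f ⟨h hv.down⟩ =
      O.germHom ⟨V, hv.down⟩ (O.res h r) • f ⟨h hv.down⟩
    rw [show O.germHom (x := x) ⟨V, hv.down⟩ (O.res h r) = O.germHom ⟨U, h hv.down⟩ r from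
      germ_res_ring (N₁ := ⟨U, h hv.down⟩) (N₂ := ⟨V, hv.down⟩) h r]
  sheaf := by
    intro ι U V hU s compat
    have mem : ∀ (h : x ∈ U), ∃ i, x ∈ V i := fun h => Opens.mem_iSup.mp (hU ▸ h)
    refine ⟨fun h => s (mem h.down).choose ⟨(mem h.down).choose_spec⟩,
      fun i => funext fun hv => ?_, ?_⟩
    · have hU' : x ∈ U := ((le_iSup V i).trans hU.ge) hv.down
      exact congrFun (compat (mem hU').choose i (V (mem hU').choose ⊓ V i)
        inf_le_left inf_le_right) ⟨⟨(mem hU').choose_spec, hv.down⟩⟩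
    · intro y hy
      funext h
      obtain ⟨i, hi⟩ := mem h.down
      have h1 : y h = s i ⟨hi⟩ := congrFun (hy i) ⟨hi⟩
      have h2 : s (mem h.down).choose ⟨(mem h.down).choose_spec⟩ = s i ⟨hi⟩ :=
        congrFun (compat _ i (V (mem h.down).choose ⊓ V i) inf_le_left inf_le_right)
          ⟨⟨(mem h.down).choose_spec, hi⟩⟩
      rw [h1, h2]

end Sky

/-- Functoriality of the skyscraper sheaf. -/
def skyMap {x : X} {A B : Type u} [AddCommGroup A] [Module (RStalk O x) A]
    [AddCommGroup B] [Module (RStalk O x) B] (φ : A →ₗ[RStalk O x] B) :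
    (sky x A : OMod O) ⟶ (sky x B : OMod O) where
  app U :=
    { toFun := fun f h => φ (f h)
      map_add' := fun f g => funext fun h => by
        show φ (f h + g h) = φ (f h) + φ (g h)
        rw [map_add]
      map_smul' := fun r f => funext fun h => by
        show φ (O.germHom ⟨U, h.down⟩ r • f h) = O.germHom ⟨U, h.down⟩ r • φ (f h)
        rw [map_smul] }
  naturality _ _ := rfl

/-- The skyscraper sheaf functor. -/
def skyFunctor (O : RingSheaf X) (x : X) : ModuleCat.{u} (RStalk O x) ⥤ OMod O where
  obj A := sky x A
  map φ := skyMap φ.hom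
  map_id A := rfl
  map_comp φ ψ := rfl

end SheafPurity

namespace SheafPurity

variable {X : Type u} [TopologicalSpace X] {O : RingSheaf X}

/-! ## Direct image along the inclusion of an open subset -/

/-- The direct image `ι_{U,*}(M|_U)` of the restriction of `M` to an open set `U`:
its sections over `V` are the sections of `M` over `U ⊓ V`. -/
def pushforwardInto (U : Opens X) (M : OMod O) : OMod O where
  obj V := M.obj (U ⊓ V)
  acg V := inferInstance
  mod V := Module.compHom _ (O.res (inf_le_right : U ⊓ V ≤ V))
  res {V W} h := M.res (inf_le_inf_left U h)
  res_id s := M.res_id s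
  res_res h1 h2 s := M.res_res _ _ s
  res_smul {V W} h r m := by
    show M.res (inf_le_inf_left U h) (O.res (inf_le_right : U ⊓ V ≤ V) r • m) =
      O.res (inf_le_right : U ⊓ W ≤ W) (O.res h r) • M.res (inf_le_inf_left U h) m
    rw [M.res_smul, O.res_res, O.res_res]
  sheaf := by
    intro ι V₀ V hV s compat
    obtain ⟨t, ht, huniq⟩ := M.sheaf ι (U ⊓ V₀) (fun i => U ⊓ V i)
      (by rw [hV, inf_iSup_eq]) s
      (by
        intro i j W hWi hWj
        have hW : W ≤ U ⊓ (V i ⊓ V j) :=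
          le_inf (hWi.trans inf_le_left)
            (le_inf (hWi.trans inf_le_right) (hWj.trans inf_le_right))
        calc M.res hWi (s i)
            = M.res hW (M.res (inf_le_inf_left U inf_le_left) (s i)) := by
              rw [M.res_res]
          _ = M.res hW (M.res (inf_le_inf_left U inf_le_right) (s j)) :=
              congrArg (M.res hW) (compat i j (V i ⊓ V j) inf_le_left inf_le_right)
          _ = M.res hWj (s j) := by rw [M.res_res])
    exact ⟨t, fun i => ht i, fun y hy => huniq y fun i => hy i⟩

/-- The unit morphism `M ⟶ ι_{U,*}(M|_U)`, given by restriction of sections. -/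
def pushforwardUnit (U : Opens X) (M : OMod O) : M ⟶ pushforwardInto U M where
  app V :=
    { toFun := fun m => M.res (inf_le_right : U ⊓ V ≤ V) m
      map_add' := fun _ _ => map_add _ _ _
      map_smul' := fun r m => by
        show M.res (inf_le_right : U ⊓ V ≤ V) (r • m) = O.res (inf_le_right : U ⊓ V ≤ V) r •
          M.res (inf_le_right : U ⊓ V ≤ V) m
        rw [M.res_smul] }
  naturality {V W} h m := by
    show M.res _ (M.res _ m) = M.res _ (M.res _ m)
    rw [M.res_res, M.res_res]

/-! ## Binary products -/

/-- The binary product of two sheaves of modules. -/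
def prod2 (M N : OMod O) : OMod O where
  obj U := M.obj U × N.obj U
  acg U := inferInstance
  mod U := inferInstance
  res {U V} h := (M.res h).prodMap (N.res h)
  res_id s := Prod.ext (M.res_id s.1) (N.res_id s.2)
  res_res h1 h2 s := Prod.ext (M.res_res h1 h2 s.1) (N.res_res h1 h2 s.2)
  res_smul h r m := Prod.ext (M.res_smul h r m.1) (N.res_smul h r m.2)
  sheaf := by
    intro ι U V hU s compat
    obtain ⟨t₁, ht₁, hu₁⟩ := M.sheaf ι U V hU (fun i => (s i).1)
      (fun i j W hWi hWj => congrArg Prod.fst (compat i j W hWi hWj))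
    obtain ⟨t₂, ht₂, hu₂⟩ := N.sheaf ι U V hU (fun i => (s i).2)
      (fun i j W hWi hWj => congrArg Prod.snd (compat i j W hWi hWj))
    refine ⟨(t₁, t₂), fun i => ?_, fun y hy => ?_⟩
    · exact Prod.ext (ht₁ i) (ht₂ i)
    · have h₁ : y.1 = t₁ := hu₁ y.1 fun i => congrArg Prod.fst (hy i)
      have h₂ : y.2 = t₂ := hu₂ y.2 fun i => congrArg Prod.snd (hy i)
      exact Prod.ext h₁ h₂

/-- A sheaf of modules is trivial (zero) if all its section modules are trivial. -/
def IsZeroOMod (M : OMod O) : Prop := ∀ U, Subsingleton (M.obj U)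

/-- An isomorphism of sheaves of modules. -/
structure OModIso (M N : OMod O) where
  hom : M ⟶ N
  inv : N ⟶ M
  hom_inv : hom ≫ inv = 𝟙 M
  inv_hom : inv ≫ hom = 𝟙 N

/-- A sheaf of modules is indecomposable if it is nonzero and in any direct sum
decomposition one of the summands is zero. -/
def IndecomposableOMod (M : OMod O) : Prop :=
  (¬ IsZeroOMod M) ∧
    ∀ (A B : OMod O), Nonempty (OModIso M (prod2 A B)) → IsZeroOMod A ∨ IsZeroOMod B

/-- The canonical morphism from `M` to the skyscraper at `x` with value the stalk `M_x`. -/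
def toSkyStalk (M : OMod O) (x : X) : M ⟶ (sky x (Stalk M x) : OMod O) where
  app U :=
    { toFun := fun m h => germ ⟨U, h.down⟩ m
      map_add' := fun m₁ m₂ => funext fun h => germ_add _ _ _
      map_smul' := fun r m => funext fun h => by
        show germ ⟨U, h.down⟩ (r • m) = O.germHom ⟨U, h.down⟩ r • germ ⟨U, h.down⟩ m
        exact germ_smul _ _ _ }
  naturality {U V} h m := by
    funext hv
    show germ ⟨U, h hv.down⟩ m = germ ⟨V, hv.down⟩ (M.res h m)
    exact (germ_res (N₁ := ⟨U, h hv.down⟩) (N₂ := ⟨V, hv.down⟩) h m).symm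

end SheafPurity

namespace SheafPurity

variable {X : Type u} [TopologicalSpace X] {O : RingSheaf X}

/-- A morphism `M|_U ⟶ N|_U` between the restrictions of two sheaves of modules to an
open set `U`: the sections over `U` of the sheaf hom `𝓗om(M, N)`. -/
structure HomOver (U : Opens X) (M N : OMod O) where
  app : ∀ (V : Opens X), V ≤ U → (M.obj V →ₗ[O.obj V] N.obj V)
  naturality : ∀ {V W : Opens X} (hVU : V ≤ U) (hWV : W ≤ V) (m : M.obj V),
    N.res hWV (app V hVU m) = app W (hWV.trans hVU) (M.res hWV m)

end SheafPurity


/-!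
A section of `𝓗om(A, N)` over `U` is a morphism `φ : A|_U ⟶ N|_U`, and by adjunction a
morphism `ι_{U,!}(A|_U) ⟶ N`, obtained by gluing `φ` on opens inside `U` with `0` on opens
where a section vanishes. The inclusion `ι_{U,!}(A|_U) ⟶ ι_{V,!}(A|_V)` is an isomorphism on
stalks at points of `U`, and its source has zero stalks elsewhere, so it is g-pure. Hence
g-pure-injectivity of `N` extends the morphism to `ι_{V,!}(A|_V)`, and restricting back gives
a section over `V` extending `φ`. For `A = O_X`, extending multiplication by a section `n`
over `U` and evaluating at `1` gives a section over `V` restricting to `n`.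
-/

namespace SheafPurity

variable {X : Type u} [TopologicalSpace X] {O : RingSheaf X}

lemma eq_iSup_of_forall_mem {W : Opens X} {p : Opens X → Prop} (hle : ∀ P, p P → P ≤ W)
    (hcov : ∀ x ∈ W, ∃ P, x ∈ P ∧ p P) : W = ⨆ P : {P // p P}, P.1 := by
  refine le_antisymm (fun x hx => ?_) (iSup_le fun P => hle P.1 P.2)
  obtain ⟨P, hxP, hP⟩ := hcov x hx
  exact Opens.mem_iSup.mpr ⟨⟨P, hP⟩, hxP⟩

namespace OMod

lemma eq_of_locally_eq (M : OMod O) {W : Opens X} {s t : M.obj W}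
    (h : ∀ x ∈ W, ∃ P, x ∈ P ∧ ∃ hP : P ≤ W, M.res hP s = M.res hP t) : s = t := by
  obtain ⟨_, -, huniq⟩ := M.sheaf _ W _ (eq_iSup_of_forall_mem (fun _ hP => hP.1) h)
    (fun P => M.res P.2.1 t) (fun _ _ _ _ _ => by beta_reduce; rw [M.res_res, M.res_res])
  exact (huniq s fun P => P.2.2).trans (huniq t fun _ => rfl).symm

end OMod

/-- The graph of a morphism `M ⟶ N` that is only known locally; gluing the local images
produces the morphism `LocalGraph.hom`. -/
structure LocalGraph (M N : OMod O) where
  rel : ∀ {P : Opens X}, M.obj P → N.obj P → Prop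
  rel_res : ∀ {P Q : Opens X} (h : Q ≤ P) {s : M.obj P} {n : N.obj P},
    rel s n → rel (M.res h s) (N.res h n)
  rel_unique : ∀ {P : Opens X} {s : M.obj P} {n n' : N.obj P}, rel s n → rel s n' → n = n'
  rel_add : ∀ {P : Opens X} {s t : M.obj P} {n m : N.obj P},
    rel s n → rel t m → rel (s + t) (n + m)
  rel_smul : ∀ {P : Opens X} (r : O.obj P) {s : M.obj P} {n : N.obj P},
    rel s n → rel (r • s) (r • n)
  exists_rel : ∀ {W : Opens X} (s : M.obj W), ∀ x ∈ W,
    ∃ P, x ∈ P ∧ ∃ hP : P ≤ W, ∃ n, rel (M.res hP s) n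

namespace LocalGraph

variable {M N : OMod O} (G : LocalGraph M N)

def Locally {W : Opens X} (s : M.obj W) (n : N.obj W) : Prop :=
  ∀ x ∈ W, ∃ P, x ∈ P ∧ ∃ hP : P ≤ W, G.rel (M.res hP s) (N.res hP n)

lemma rel_res_trans {P Q W : Opens X} (hQ : Q ≤ P) (hP : P ≤ W) {s : M.obj W} {n : N.obj W}
    (h : G.rel (M.res hP s) (N.res hP n)) :
    G.rel (M.res (hQ.trans hP) s) (N.res (hQ.trans hP) n) := by
  simpa only [M.res_res, N.res_res] using G.rel_res hQ h

lemma locally_of_rel {W : Opens X} {s : M.obj W} {n : N.obj W} (h : G.rel s n) :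
    G.Locally s n :=
  fun _ hx => ⟨W, hx, le_rfl, G.rel_res le_rfl h⟩

variable {G}

lemma Locally.unique {W : Opens X} {s : M.obj W} {n n' : N.obj W} (h : G.Locally s n)
    (h' : G.Locally s n') : n = n' := by
  refine N.eq_of_locally_eq fun x hx => ?_
  obtain ⟨P, hxP, hP, hn⟩ := h x hx
  obtain ⟨P', hxP', hP', hn'⟩ := h' x hx
  refine ⟨P ⊓ P', ⟨hxP, hxP'⟩, inf_le_left.trans hP,
    G.rel_unique (s := M.res (inf_le_left.trans hP) s) ?_ ?_⟩
  · exact G.rel_res_trans inf_le_left hP hn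
  · exact G.rel_res_trans inf_le_right hP' hn'

lemma Locally.add {W : Opens X} {s t : M.obj W} {n m : N.obj W} (hn : G.Locally s n)
    (hm : G.Locally t m) : G.Locally (s + t) (n + m) := by
  intro x hx
  obtain ⟨P, hxP, hP, hPn⟩ := hn x hx
  obtain ⟨P', hxP', hP', hPm⟩ := hm x hx
  refine ⟨P ⊓ P', ⟨hxP, hxP'⟩, inf_le_left.trans hP, ?_⟩
  rw [map_add, map_add]
  exact G.rel_add (G.rel_res_trans inf_le_left hP hPn) (G.rel_res_trans inf_le_right hP' hPm)

lemma Locally.smul {W : Opens X} (r : O.obj W) {s : M.obj W} {n : N.obj W}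
    (hn : G.Locally s n) : G.Locally (r • s) (r • n) := by
  intro x hx
  obtain ⟨P, hxP, hP, hPn⟩ := hn x hx
  refine ⟨P, hxP, hP, ?_⟩
  rw [M.res_smul, N.res_smul]
  exact G.rel_smul _ hPn

lemma Locally.res {V W : Opens X} (h : V ≤ W) {s : M.obj W} {n : N.obj W}
    (hn : G.Locally s n) : G.Locally (M.res h s) (N.res h n) := by
  intro x hx
  obtain ⟨P, hxP, hP, hPn⟩ := hn x (h hx)
  refine ⟨P ⊓ V, ⟨hxP, hx⟩, inf_le_right, ?_⟩
  rw [M.res_res, N.res_res]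
  exact G.rel_res_trans inf_le_left hP hPn

variable (G)

lemma exists_locally {W : Opens X} (s : M.obj W) : ∃ n, G.Locally s n := by
  have rel_of_le {P Q : Opens X} (hQ : Q ≤ P) (hP : P ≤ W) {n : N.obj P}
      (h : G.rel (M.res hP s) n) : G.rel (M.res (hQ.trans hP) s) (N.res hQ n) := by
    simpa only [M.res_res] using G.rel_res hQ h
  obtain ⟨n, hn, -⟩ := N.sheaf _ W _ (eq_iSup_of_forall_mem (fun _ hP => hP.1) (G.exists_rel s))
    (fun P => P.2.2.choose) fun P P' _ hQ hQ' =>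
      G.rel_unique (rel_of_le hQ P.2.1 P.2.2.choose_spec) (rel_of_le hQ' P'.2.1 P'.2.2.choose_spec)
  refine ⟨n, fun x hx => ?_⟩
  obtain ⟨P, hxP, hP, hPn⟩ := G.exists_rel s x hx
  have hnP := hn ⟨P, hP, hPn⟩
  beta_reduce at hnP
  exact ⟨P, hxP, hP, by rw [hnP]; exact hPn.choose_spec⟩

noncomputable def homApp {W : Opens X} (s : M.obj W) : N.obj W :=
  (G.exists_locally s).choose

lemma locally_homApp {W : Opens X} (s : M.obj W) : G.Locally s (G.homApp s) :=
  (G.exists_locally s).choose_spec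

noncomputable def hom : M ⟶ N where
  app _ :=
    { toFun := G.homApp
      map_add' := fun s t =>
        (G.locally_homApp _).unique ((G.locally_homApp s).add (G.locally_homApp t))
      map_smul' := fun r s => (G.locally_homApp _).unique ((G.locally_homApp s).smul r) }
  naturality h s := ((G.locally_homApp s).res h).unique (G.locally_homApp _)

lemma hom_app_eq_of_rel {W : Opens X} {s : M.obj W} {n : N.obj W} (h : G.rel s n) :
    (G.hom : Hom M N).app W s = n :=
  (G.locally_homApp s).unique (G.locally_of_rel h)

end LocalGraph

lemma germRel_equivalence (M : OMod O) (x : X) : Equivalence (germRel M x) where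
  refl a := ⟨a.1, le_rfl, le_rfl, rfl⟩
  symm := fun ⟨W, h₁, h₂, e⟩ => ⟨W, h₂, h₁, e.symm⟩
  trans := by
    rintro a b c ⟨W, h₁, h₂, e⟩ ⟨W', h₁', h₂', e'⟩
    refine ⟨W.inf W', (W.inf_le_left W').trans h₁, (W.inf_le_right W').trans h₂', ?_⟩
    calc M.res _ a.2 = M.res (W.inf_le_left W') (M.res h₁ a.2) := (M.res_res _ _ _).symm
      _ = M.res (W.inf_le_right W') (M.res h₁' b.2) := by rw [e, M.res_res, M.res_res]
      _ = M.res _ c.2 := by rw [e', M.res_res]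

lemma exists_res_eq_of_germ_eq {M : OMod O} {x : X} {N₁ N₂ : Nbhd x} {s₁ : M.obj N₁.U}
    {s₂ : M.obj N₂.U} (h : (germ N₁ s₁ : Stalk M x) = germ N₂ s₂) :
    ∃ (W : Nbhd x) (h₁ : W.U ≤ N₁.U) (h₂ : W.U ≤ N₂.U), M.res h₁ s₁ = M.res h₂ s₂ :=
  (germRel_equivalence M x).eqvGen_iff.mp (Quot.eq.mp h)

lemma stalkMap_injective {M N : OMod O} (f : M ⟶ N)
    (hf : ∀ U, Function.Injective ((f : Hom M N).app U)) (x : X) :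
    Function.Injective (stalkMap f x) := by
  intro a b hab
  obtain ⟨N₁, s₁, rfl⟩ := germ_surj a
  obtain ⟨N₂, s₂, rfl⟩ := germ_surj b
  obtain ⟨W, h₁, h₂, e⟩ := exists_res_eq_of_germ_eq hab
  rw [Hom.naturality, Hom.naturality] at e
  exact germ_eq W h₁ h₂ (hf _ e)

lemma isPureMono_of_bijective {R : Type u} [Ring R] {A B : Type u} [AddCommGroup A]
    [Module R A] [AddCommGroup B] [Module R B] {f : A →ₗ[R] B}
    (hf : Function.Bijective f) : IsPureMono f := by
  refine ⟨hf.1, fun m n G a b hb => ?_⟩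
  choose a' ha' using fun j => hf.2 (b j)
  refine ⟨a', fun i => hf.1 ?_⟩
  simpa only [map_sum, map_smul, ha'] using hb i

lemma isPureMono_of_subsingleton {R : Type u} [Ring R] {A B : Type u} [AddCommGroup A]
    [Module R A] [AddCommGroup B] [Module R B] [Subsingleton A] (f : A →ₗ[R] B) :
    IsPureMono f :=
  ⟨fun _ _ _ => Subsingleton.elim _ _, fun _ _ _ a _ _ => ⟨0, fun i => Subsingleton.elim _ (a i)⟩⟩

def IsSupportedIn (U : Opens X) {A : OMod O} {W : Opens X} (s : A.obj W) : Prop :=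
  ∀ x ∈ W, ∃ P, x ∈ P ∧ ∃ hP : P ≤ W, P ≤ U ∨ A.res hP s = 0

section Supported

variable {U : Opens X} {A : OMod O}

lemma isSupportedIn_of_le {W : Opens X} (hW : W ≤ U) (s : A.obj W) : IsSupportedIn U s :=
  fun _ hx => ⟨W, hx, le_rfl, Or.inl hW⟩

lemma IsSupportedIn.mono {V : Opens X} (hUV : U ≤ V) {W : Opens X} {s : A.obj W}
    (hs : IsSupportedIn U s) : IsSupportedIn V s :=
  fun x hx => (hs x hx).imp fun _ ⟨hxP, hP, h⟩ => ⟨hxP, hP, h.imp_left (·.trans hUV)⟩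

lemma IsSupportedIn.res {W V : Opens X} (h : V ≤ W) {s : A.obj W} (hs : IsSupportedIn U s) :
    IsSupportedIn U (A.res h s) := by
  intro x hx
  obtain ⟨P, hxP, hP, hPs⟩ := hs x (h hx)
  refine ⟨P ⊓ V, ⟨hxP, hx⟩, inf_le_right, hPs.imp (inf_le_left.trans ·) fun h0 => ?_⟩
  rw [A.res_res, ← A.res_res inf_le_left hP, h0, map_zero]

def supportedSubmodule (U : Opens X) (A : OMod O) (W : Opens X) :
    Submodule (O.obj W) (A.obj W) where
  carrier := {s | IsSupportedIn U s}
  zero_mem' := fun _ hx => ⟨W, hx, le_rfl, Or.inr (map_zero _)⟩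
  add_mem' := by
    intro s t hs ht x hx
    obtain ⟨P, hxP, hP, hPs⟩ := hs x hx
    obtain ⟨P', hxP', hP', hPt⟩ := ht x hx
    refine ⟨P ⊓ P', ⟨hxP, hxP'⟩, inf_le_left.trans hP, ?_⟩
    rcases hPs with hPU | hs0
    · exact Or.inl (inf_le_left.trans hPU)
    rcases hPt with hPU | ht0
    · exact Or.inl (inf_le_right.trans hPU)
    refine Or.inr ?_
    rw [map_add, ← A.res_res inf_le_left hP, hs0, ← A.res_res (inf_le_right : P ⊓ P' ≤ P') hP',
      ht0, map_zero, map_zero, add_zero]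
  smul_mem' := by
    intro r s hs x hx
    obtain ⟨P, hxP, hP, hPs⟩ := hs x hx
    exact ⟨P, hxP, hP, hPs.imp_right fun h0 => by rw [A.res_smul, h0, smul_zero]⟩

/-- The subsheaf of `A` of sections supported in `U`: a model of `ι_{U,!}(A|_U)`. -/
def shriek (U : Opens X) (A : OMod O) : OMod O where
  obj W := supportedSubmodule U A W
  acg _ := inferInstance
  mod _ := inferInstance
  res h :=
    { toFun := fun s => ⟨A.res h s.1, s.2.res h⟩
      map_zero' := Subtype.ext (map_zero _)
      map_add' := fun _ _ => Subtype.ext (map_add _ _ _) }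
  res_id s := Subtype.ext (A.res_id s.1)
  res_res h₁ h₂ s := Subtype.ext (A.res_res h₁ h₂ s.1)
  res_smul h r s := Subtype.ext (A.res_smul h r s.1)
  sheaf := by
    intro ι W V hW s compat
    obtain ⟨t, ht, hu⟩ := A.sheaf ι W V hW (fun i => (s i).1)
      (fun i j W' h₁ h₂ => congrArg Subtype.val (compat i j W' h₁ h₂))
    have hts : IsSupportedIn U t := by
      intro x hx
      obtain ⟨i, hi⟩ := Opens.mem_iSup.mp (hW ▸ hx)
      obtain ⟨P, hxP, hP, hPs⟩ := (s i).2 x hi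
      refine ⟨P, hxP, hP.trans ((le_iSup V i).trans hW.ge), hPs.imp_right fun h0 => ?_⟩
      have hti : A.res ((le_iSup V i).trans hW.ge) t = (s i).1 := ht i
      rw [← A.res_res hP ((le_iSup V i).trans hW.ge), hti, h0]
    exact ⟨⟨t, hts⟩, fun i => Subtype.ext (ht i),
      fun y hy => Subtype.ext (hu y.1 fun i => congrArg Subtype.val (hy i))⟩

def shriekMap {V : Opens X} (hUV : U ≤ V) (A : OMod O) : shriek U A ⟶ shriek V A where
  app _ :=
    { toFun := fun s => ⟨s.1, s.2.mono hUV⟩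
      map_add' := fun _ _ => rfl
      map_smul' := fun _ _ => rfl }
  naturality _ _ := rfl

lemma subsingleton_stalk_shriek {x : X} (hx : x ∉ U) : Subsingleton (Stalk (shriek U A) x) := by
  suffices h : ∀ c : Stalk (shriek U A) x, c = 0 from ⟨fun a b => (h a).trans (h b).symm⟩
  intro c
  obtain ⟨Nb, s, rfl⟩ := germ_surj c
  obtain ⟨P, hxP, hP, hPs⟩ := s.2 x Nb.mem
  rcases hPs with hPU | h0
  · exact absurd (hPU hxP) hx
  rw [← germ_res (N₂ := ⟨P, hxP⟩) hP s, show (shriek U A).res hP s = 0 from Subtype.ext h0,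
    germ_zero]

lemma stalkMap_shriekMap_surjective {V : Opens X} (hUV : U ≤ V) {x : X} (hx : x ∈ U) :
    Function.Surjective (stalkMap (shriekMap hUV A) x) := by
  intro t
  obtain ⟨Nb, s, rfl⟩ := germ_surj t
  let Nb' : Nbhd x := ⟨U ⊓ Nb.U, hx, Nb.mem⟩
  refine ⟨germ Nb' ⟨A.res inf_le_right s.1, isSupportedIn_of_le inf_le_left _⟩, ?_⟩
  exact germ_res (N₂ := Nb') inf_le_right s

lemma shriekMap_isGPureMono {V : Opens X} (hUV : U ≤ V) : IsGPureMono (shriekMap hUV A) := by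
  have hinj : ∀ W, Function.Injective ((shriekMap hUV A : Hom _ _).app W) :=
    fun W _ _ h => Subtype.ext (congrArg (fun c : (shriek V A).obj W => (c.1 : A.obj W)) h)
  refine ⟨hinj, fun x => ?_⟩
  by_cases hx : x ∈ U
  · exact isPureMono_of_bijective
      ⟨stalkMap_injective _ hinj x, stalkMap_shriekMap_surjective hUV hx⟩
  · have := subsingleton_stalk_shriek (A := A) hx
    exact isPureMono_of_subsingleton _

end Supported

section Extension

variable {U : Opens X} {A N : OMod O}

/-- The graph of the extension by zero of `φ : A|_U ⟶ N|_U`. -/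
def ExtZeroRel (φ : HomOver U A N) {P : Opens X} (a : A.obj P) (n : N.obj P) : Prop :=
  (∃ hP : P ≤ U, n = φ.app P hP a) ∨ (a = 0 ∧ n = 0)

namespace ExtZeroRel

variable {φ : HomOver U A N} {P : Opens X} {a b : A.obj P} {n m : N.obj P}

lemma eq_app (h : ExtZeroRel φ a n) (hP : P ≤ U) : n = φ.app P hP a := by
  rcases h with ⟨_, rfl⟩ | ⟨rfl, rfl⟩
  · rfl
  · exact (map_zero _).symm

lemma eq_zero (h : ExtZeroRel φ a n) (hP : ¬ P ≤ U) : a = 0 ∧ n = 0 :=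
  h.resolve_left fun ⟨hPU, _⟩ => hP hPU

lemma res {Q : Opens X} (hQ : Q ≤ P) (h : ExtZeroRel φ a n) :
    ExtZeroRel φ (A.res hQ a) (N.res hQ n) := by
  rcases h with ⟨hP, rfl⟩ | ⟨rfl, rfl⟩
  · exact Or.inl ⟨hQ.trans hP, φ.naturality hP hQ a⟩
  · exact Or.inr ⟨map_zero _, map_zero _⟩

lemma unique {n' : N.obj P} (h : ExtZeroRel φ a n) (h' : ExtZeroRel φ a n') : n = n' := by
  by_cases hP : P ≤ U
  · exact (h.eq_app hP).trans (h'.eq_app hP).symm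
  · exact (h.eq_zero hP).2.trans (h'.eq_zero hP).2.symm

lemma add (ha : ExtZeroRel φ a n) (hb : ExtZeroRel φ b m) : ExtZeroRel φ (a + b) (n + m) := by
  by_cases hP : P ≤ U
  · exact Or.inl ⟨hP, by rw [ha.eq_app hP, hb.eq_app hP, map_add]⟩
  · obtain ⟨rfl, rfl⟩ := ha.eq_zero hP
    obtain ⟨rfl, rfl⟩ := hb.eq_zero hP
    exact Or.inr ⟨add_zero 0, add_zero 0⟩

lemma smul (r : O.obj P) (h : ExtZeroRel φ a n) : ExtZeroRel φ (r • a) (r • n) := by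
  rcases h with ⟨hP, rfl⟩ | ⟨rfl, rfl⟩
  · exact Or.inl ⟨hP, (map_smul _ r a).symm⟩
  · exact Or.inr ⟨smul_zero r, smul_zero r⟩

end ExtZeroRel

/-- `(extZeroGraph φ).hom : ι_{U,!}(A|_U) ⟶ N` is the morphism corresponding to `φ` under the
adjunction `Hom(ι_{U,!}(A|_U), N) ≅ Hom(A|_U, N|_U)`. -/
def extZeroGraph (φ : HomOver U A N) : LocalGraph (shriek U A) N where
  rel s n := ExtZeroRel φ s.1 n
  rel_res h _ _ hs := hs.res h
  rel_unique := ExtZeroRel.unique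
  rel_add := ExtZeroRel.add
  rel_smul r _ _ hs := hs.smul r
  exists_rel s x hx := by
    obtain ⟨P, hxP, hP, hPs⟩ := s.2 x hx
    refine ⟨P, hxP, hP, ?_⟩
    rcases hPs with hPU | h0
    · exact ⟨_, Or.inl ⟨hPU, rfl⟩⟩
    · exact ⟨0, Or.inr ⟨h0, rfl⟩⟩

lemma extZeroGraph_hom_app_of_le (φ : HomOver U A N) {W : Opens X} (hW : W ≤ U)
    (s : (shriek U A).obj W) : ((extZeroGraph φ).hom : Hom _ _).app W s = φ.app W hW s.1 :=
  (extZeroGraph φ).hom_app_eq_of_rel (Or.inl ⟨hW, rfl⟩)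

def HomOver.ofShriek {V : Opens X} (Ψ : shriek V A ⟶ N) : HomOver V A N where
  app W hW := (Ψ : Hom _ _).app W ∘ₗ
    LinearMap.codRestrict (supportedSubmodule V A W) LinearMap.id (isSupportedIn_of_le hW)
  naturality _ hWV _ := Hom.naturality Ψ hWV _

lemma HomOver.exists_extension (hN : GPureInjective N) {V : Opens X} (h : U ≤ V)
    (φ : HomOver U A N) :
    ∃ ψ : HomOver V A N, ∀ (W : Opens X) (hW : W ≤ U) (m : A.obj W),
      ψ.app W (hW.trans h) m = φ.app W hW m := by
  obtain ⟨Ψ, hΨ⟩ := hN _ _ (shriekMap h A) (shriekMap_isGPureMono h) (extZeroGraph φ).hom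
  refine ⟨HomOver.ofShriek Ψ, fun W hW m => ?_⟩
  rw [← extZeroGraph_hom_app_of_le φ hW ⟨m, isSupportedIn_of_le hW m⟩, ← hΨ]
  rfl

end Extension

def HomOver.ofSection {U : Opens X} {N : OMod O} (n : N.obj U) : HomOver U O.toOMod N where
  app W hW := LinearMap.toSpanSingleton (O.obj W) (N.obj W) (N.res hW n)
  naturality hVU hWV r := by
    simp only [LinearMap.toSpanSingleton_apply, N.res_smul, N.res_res, rh_apply]

lemma OMod.res_surjective_of_homOver_extends (N : OMod O)
    (hext : ∀ (U V : Opens X) (h : U ≤ V) (φ : HomOver U O.toOMod N),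
      ∃ ψ : HomOver V O.toOMod N, ∀ (W : Opens X) (hW : W ≤ U) (m : O.obj W),
        ψ.app W (hW.trans h) m = φ.app W hW m)
    {U V : Opens X} (h : U ≤ V) : Function.Surjective (N.res h) := by
  intro n
  obtain ⟨ψ, hψ⟩ := hext U V h (HomOver.ofSection n)
  refine ⟨ψ.app V le_rfl 1, ?_⟩
  rw [ψ.naturality, toOMod_res, map_one, hψ U le_rfl]
  simp [HomOver.ofSection, N.res_id]

end SheafPurity

open SheafPurity in
/-- Let `X` be a ringed space, `N` a g-pure-injective `O_X`-module and
`A` any `O_X`-module. Then the sheaf hom `𝓗om_X(A, N)` is flasque: for opens `U ≤ V`,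
every section over `U` (i.e. every morphism `A|_U ⟶ N|_U`) extends to a section over
`V`. In particular `N ≅ 𝓗om(O_X, N)` itself is flasque: all its restriction maps are
surjective. -/
theorem sheafHom_into_gPureInjective_is_flasque
    {X : Type u} [TopologicalSpace X] (O : RingSheaf X) (N : OMod O)
    (hN : GPureInjective N) :
    (∀ (A : OMod O) (U V : Opens X) (h : U ≤ V) (φ : HomOver U A N),
      ∃ ψ : HomOver V A N, ∀ (W : Opens X) (hW : W ≤ U) (m : A.obj W),
        ψ.app W (hW.trans h) m = φ.app W hW m) ∧
    (∀ (U V : Opens X) (h : U ≤ V), Function.Surjective (N.res h)) :=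
  ⟨fun _ _ _ h φ => HomOver.exists_extension hN h φ,
    fun _ _ h => N.res_surjective_of_homOver_extends
      (fun _ _ h φ => HomOver.exists_extension hN h φ) h⟩
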